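/- Let C be as in the setting of Theorem 3.8 (2-CY triangulated with cluster-tilting object T, Hom-finite, Krull–Schmidt), F = C(T,−), and define ⟨X,Y⟩ = dim_K Hom_Λ(FX,FY) where Λ = End_C(T). For indecomposable objects A, B with A ∉ add(ΣT), letting ℓ_A = [A] + [Σ^{-1}A] − [E] ∈ K_0^{sp}(C) where A → E → Σ^{-1}A → ΣA is the almost-split triangle starting at A, we have ⟨ℓ_A, B⟩ = 0 if A ≇ B, and ⟨ℓ_A, A⟩ = dim_K K_A > 0 where K_A is the residue field of End_C(A). -/

import Mathlib

open CategoryTheory CategoryTheory.Limits CategoryTheory.Pretriangulated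

universe v u

variable (K : Type*) [Field K]
variable {C : Type u} [Category.{v} C] [Preadditive C] [CategoryTheory.Linear K C]
  [HasZeroObject C] [HasShift C ℤ] [∀ n : ℤ, (CategoryTheory.shiftFunctor C n).Additive]
  [Pretriangulated C] [HasFiniteBiproducts C]

/-- Indecomposable object: nonzero and with no nontrivial direct sum decomposition. -/
def Indec (X : C) : Prop :=
  ¬ Limits.IsZero X ∧ ∀ (Y Z : C), Nonempty (X ≅ Y ⊞ Z) → Limits.IsZero Y ∨ Limits.IsZero Z

/-- `X` is a direct summand of a finite direct sum of copies of `T`. -/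
def InAdd (T X : C) : Prop :=
  ∃ (k : ℕ) (s : X ⟶ ⨁ (fun _ : Fin k => T)) (r : (⨁ (fun _ : Fin k => T)) ⟶ X),
    s ≫ r = 𝟙 X

/-- A morphism factors through the additive closure `add T`. -/
def FactorsAdd (T : C) {A B : C} (h : A ⟶ B) : Prop :=
  ∃ (W : C) (u : A ⟶ W) (v : W ⟶ B), InAdd T W ∧ u ≫ v = h

/-- A triangle `X →f E →g Z →h ΣX` is almost-split. -/
def AlmostSplitTriangle {X E Z : C} (f : X ⟶ E) (g : E ⟶ Z)
    (h : Z ⟶ (shiftFunctor C (1 : ℤ)).obj X) : Prop :=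
  (Triangle.mk f g h ∈ distTriang C) ∧ Indec X ∧ Indec Z ∧ h ≠ 0 ∧
    ∀ (X' : C) (u : X ⟶ X'), (¬ ∃ r : X' ⟶ X, u ≫ r = 𝟙 X) → ∃ w : E ⟶ X', f ≫ w = u

/-- The bilinear form `⟨X,Y⟩ = dim_K Hom_Λ(FX, FY)`, where `Λ = End_C(T)`, `F = C(T,−)`;
via the equivalence `C/(ΣT) ≃ mod Λ` this is the `K`-dimension of the quotient of `X ⟶ Y`
by the morphisms factoring through `add ΣT`. -/
noncomputable def homPair (ST X Y : C) : ℕ :=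
  Module.finrank K ((X ⟶ Y) ⧸ Submodule.span K {f : X ⟶ Y | FactorsAdd ST f})

/-- The `K`-dimension of the residue field `K_A` of the local ring `End_C(A)`:
`dim_K End(A) − dim_K (maximal ideal of nonunits)`. -/
noncomputable def resDim (A : C) : ℕ :=
  Module.finrank K (End A) - Module.finrank K (Submodule.span K {e : End A | ¬ IsUnit e})

section Aux

set_option linter.unusedSectionVars false

/-! ### Basic facts about `InAdd` -/

lemma inAdd_self (T : C) : InAdd T T := by
  refine ⟨1, biproduct.lift (fun _ => 𝟙 T), biproduct.π _ 0, ?_⟩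
  simp

lemma inAdd_of_retract {T X Y : C} (hY : InAdd T Y) (s : X ⟶ Y) (r : Y ⟶ X)
    (hsr : s ≫ r = 𝟙 X) : InAdd T X := by
  obtain ⟨k, s', r', h'⟩ := hY
  refine ⟨k, s ≫ s', r' ≫ r, ?_⟩
  calc (s ≫ s') ≫ r' ≫ r = s ≫ (s' ≫ r') ≫ r := by simp only [Category.assoc]
    _ = 𝟙 X := by rw [h', Category.id_comp, hsr]

lemma inAdd_of_iso {T X Y : C} (hY : InAdd T Y) (e : X ≅ Y) : InAdd T X :=
  inAdd_of_retract hY e.hom e.inv e.hom_inv_id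

lemma inAdd_biproduct (T : C) (k : ℕ) : InAdd T (⨁ (fun _ : Fin k => T)) :=
  ⟨k, 𝟙 _, 𝟙 _, Category.comp_id _⟩

lemma inAdd_shift {T X : C} (hX : InAdd T X) :
    InAdd ((shiftFunctor C (1 : ℤ)).obj T) ((shiftFunctor C (1 : ℤ)).obj X) := by
  obtain ⟨k, s, r, hsr⟩ := hX
  refine ⟨k,
    biproduct.lift (fun j => (shiftFunctor C (1 : ℤ)).map (s ≫ biproduct.π _ j)),
    biproduct.desc (fun j => (shiftFunctor C (1 : ℤ)).map (biproduct.ι (fun _ : Fin k => T) j ≫ r)), ?_⟩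
  rw [biproduct.lift_desc]
  have h1 : ∀ j : Fin k,
      (shiftFunctor C (1 : ℤ)).map (s ≫ biproduct.π (fun _ : Fin k => T) j) ≫
        (shiftFunctor C (1 : ℤ)).map (biproduct.ι (fun _ : Fin k => T) j ≫ r)
      = (shiftFunctor C (1 : ℤ)).map
          (s ≫ (biproduct.π (fun _ : Fin k => T) j ≫ biproduct.ι (fun _ : Fin k => T) j) ≫ r) := by
    intro j
    rw [← Functor.map_comp]
    congr 1
    simp only [Category.assoc]
  rw [Finset.sum_congr rfl (fun j _ => h1 j), ← Functor.map_sum]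
  have h2 : (∑ j : Fin k,
      s ≫ (biproduct.π (fun _ : Fin k => T) j ≫ biproduct.ι (fun _ : Fin k => T) j) ≫ r)
      = 𝟙 X := by
    rw [← Preadditive.comp_sum, ← Preadditive.sum_comp, biproduct.total, Category.id_comp, hsr]
  rw [h2]
  exact (shiftFunctor C (1 : ℤ)).map_id X

/-! ### The kernel characterisation of morphisms factoring through `add ΣT` -/

lemma homToShiftAdd_zero (T : C)
    (hT : ∀ X : C, (∀ f : T ⟶ (shiftFunctor C (1 : ℤ)).obj X, f = 0) ↔ InAdd T X)
    {k : ℕ} (w : T ⟶ ⨁ (fun _ : Fin k => (shiftFunctor C (1 : ℤ)).obj T)) : w = 0 := by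
  apply biproduct.hom_ext
  intro j
  rw [(hT T).mpr (inAdd_self T) (w ≫ biproduct.π _ j), zero_comp]

lemma factors_vanish (T : C)
    (hT : ∀ X : C, (∀ f : T ⟶ (shiftFunctor C (1 : ℤ)).obj X, f = 0) ↔ InAdd T X)
    {X Y : C} {m : X ⟶ Y}
    (hm : FactorsAdd ((shiftFunctor C (1 : ℤ)).obj T) m) (t : T ⟶ X) : t ≫ m = 0 := by
  obtain ⟨W, u, v, ⟨k, s, r, hsr⟩, huv⟩ := hm
  have h0 : t ≫ u ≫ s = 0 := homToShiftAdd_zero T hT _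
  have h2 : t ≫ u = (t ≫ u ≫ s) ≫ r := by
    simp only [Category.assoc, hsr, Category.comp_id]
  rw [← huv, ← Category.assoc, h2, h0, zero_comp, zero_comp]

lemma vanish_factors (T : C)
    (hT : ∀ X : C, (∀ f : T ⟶ (shiftFunctor C (1 : ℤ)).obj X, f = 0) ↔ InAdd T X)
    (homfin : ∀ X Y : C, FiniteDimensional K (X ⟶ Y))
    {X Y : C} (m : X ⟶ Y) (hm : ∀ t : T ⟶ X, t ≫ m = 0) :
    FactorsAdd ((shiftFunctor C (1 : ℤ)).obj T) m := by
  haveI := homfin T X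
  let n := Module.finrank K (T ⟶ X)
  let b : Module.Basis (Fin n) K (T ⟶ X) := Module.finBasis K (T ⟶ X)
  let π : (⨁ (fun _ : Fin n => T)) ⟶ X := biproduct.desc (fun i => b i)
  have happrox : ∀ t : T ⟶ X, ∃ s : T ⟶ ⨁ (fun _ : Fin n => T), s ≫ π = t := by
    intro t
    refine ⟨biproduct.lift (fun i => b.repr t i • 𝟙 T), ?_⟩
    rw [biproduct.lift_desc]
    simp only [Linear.smul_comp, Category.id_comp]
    exact b.sum_repr t
  obtain ⟨Q, q, δ, hTri⟩ := Pretriangulated.distinguished_cocone_triangle π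
  have hπq : π ≫ q = 0 := comp_distTriang_mor_zero₁₂ _ hTri
  have hQ0 : ∀ φ : T ⟶ Q, φ = 0 := by
    intro φ
    have h1 : φ ≫ δ = 0 := (hT _).mpr (inAdd_biproduct T n) _
    obtain ⟨t, ht⟩ : ∃ t : T ⟶ X, φ = t ≫ q := Triangle.coyoneda_exact₃ _ hTri φ h1
    obtain ⟨s, hs⟩ := happrox t
    rw [ht, ← hs, Category.assoc]
    show s ≫ π ≫ q = 0
    rw [hπq, comp_zero]
  let α : (shiftFunctor C (1 : ℤ)).obj ((shiftFunctor C (-1 : ℤ)).obj Q) ≅ Q :=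
    (shiftFunctorCompIsoId C (-1 : ℤ) (1 : ℤ) (by norm_num)).app Q
  have hN : InAdd T ((shiftFunctor C (-1 : ℤ)).obj Q) := by
    refine (hT _).mp (fun ψ => ?_)
    have hz := hQ0 (ψ ≫ α.hom)
    calc ψ = (ψ ≫ α.hom) ≫ α.inv := by simp
      _ = 0 := by rw [hz, zero_comp]
  have hQW : InAdd ((shiftFunctor C (1 : ℤ)).obj T) Q :=
    inAdd_of_iso (inAdd_shift hN) α.symm
  have hπm : π ≫ m = 0 := by
    apply biproduct.hom_ext'
    intro j
    have hι : biproduct.ι (fun _ : Fin n => T) j ≫ π = b j := biproduct.ι_desc _ _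
    rw [comp_zero, ← Category.assoc, hι, hm]
  obtain ⟨m', hm'⟩ := Triangle.yoneda_exact₂ _ hTri m hπm
  exact ⟨Q, q, m', hQW, hm'.symm⟩

/-- The submodule of morphisms killed by all `t : T ⟶ X`. -/
def Mker (T X Y : C) : Submodule K (X ⟶ Y) where
  carrier := {m | ∀ t : T ⟶ X, t ≫ m = 0}
  add_mem' := fun {a b} ha hb t => by rw [Preadditive.comp_add, ha t, hb t, add_zero]
  zero_mem' := fun t => comp_zero
  smul_mem' := fun c m hm t => by rw [Linear.comp_smul, hm t, smul_zero]

lemma mem_Mker {T X Y : C} {m : X ⟶ Y} :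
    m ∈ Mker K T X Y ↔ ∀ t : T ⟶ X, t ≫ m = 0 := Iff.rfl

lemma span_factors (T : C)
    (hT : ∀ X : C, (∀ f : T ⟶ (shiftFunctor C (1 : ℤ)).obj X, f = 0) ↔ InAdd T X)
    (homfin : ∀ X Y : C, FiniteDimensional K (X ⟶ Y)) (X Y : C) :
    Submodule.span K {f : X ⟶ Y | FactorsAdd ((shiftFunctor C (1 : ℤ)).obj T) f}
      = Mker K T X Y := by
  apply le_antisymm
  · rw [Submodule.span_le]
    intro m hm
    exact fun t => factors_vanish T hT hm t
  · intro m hm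
    exact Submodule.subset_span (vanish_factors K T hT homfin m hm)

lemma homPair_eq (T : C)
    (hT : ∀ X : C, (∀ f : T ⟶ (shiftFunctor C (1 : ℤ)).obj X, f = 0) ↔ InAdd T X)
    (homfin : ∀ X Y : C, FiniteDimensional K (X ⟶ Y)) (X Y : C) :
    homPair K ((shiftFunctor C (1 : ℤ)).obj T) X Y
      = Module.finrank K ((X ⟶ Y) ⧸ Mker K T X Y) := by
  unfold homPair
  rw [span_factors K T hT homfin X Y]

/-! ### Local rings and retracts -/

lemma indec_of_iso {X Y : C} (hY : Indec Y) (e : X ≅ Y) : Indec X := by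
  refine ⟨fun h0 => hY.1 (h0.of_iso e.symm), fun Y' Z' ⟨i⟩ => hY.2 Y' Z' ⟨e.symm ≪≫ i⟩⟩

lemma retract_id {A B : C} (h0 : ¬ Limits.IsZero A) (hBloc : IsLocalRing (End B))
    (u : A ⟶ B) (r : B ⟶ A) (hur : u ≫ r = 𝟙 A) : r ≫ u = 𝟙 B := by
  letI := hBloc
  set e : End B := End.of (r ≫ u) with he
  have hidem : e * e = e := by
    show (r ≫ u) ≫ r ≫ u = r ≫ u
    rw [Category.assoc, ← Category.assoc u r u, hur, Category.id_comp]
  rcases IsLocalRing.isUnit_or_isUnit_of_add_one (a := e) (b := 1 - e) (by abel) with hu | hu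
  · have h1 : e = 1 := hu.mul_left_cancel (by rw [hidem, mul_one])
    exact h1
  · exfalso
    obtain ⟨v, hv⟩ := hu
    have h2 : u ≫ ((1 : End B) - e) = 0 := by
      show u ≫ (𝟙 B - r ≫ u) = 0
      rw [Preadditive.comp_sub, Category.comp_id, ← Category.assoc, hur, Category.id_comp,
        sub_self]
    have h3 : ((1 : End B) - e) ≫ ((v⁻¹ : (End B)ˣ) : End B) = 𝟙 B := by
      rw [← hv]
      exact v.inv_mul
    have h4 : u = 0 := by
      calc u = u ≫ 𝟙 B := (Category.comp_id u).symm
        _ = u ≫ (((1 : End B) - e) ≫ ((v⁻¹ : (End B)ˣ) : End B)) := by rw [h3]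
        _ = (u ≫ ((1 : End B) - e)) ≫ ((v⁻¹ : (End B)ˣ) : End B) := by
            rw [Category.assoc]
        _ = 0 := by rw [h2, zero_comp]
    apply h0
    rw [Limits.IsZero.iff_id_eq_zero, ← hur, h4, zero_comp]

lemma isUnit_of_section {A : C} (h0 : ¬ Limits.IsZero A) (hloc : IsLocalRing (End A))
    (u r : A ⟶ A) (hur : u ≫ r = 𝟙 A) : IsUnit (End.of u) := by
  have h2 : r ≫ u = 𝟙 A := retract_id h0 hloc u r hur
  exact ⟨⟨u, r, h2, hur⟩, rfl⟩

/-- The submodule of non-units of a local endomorphism ring. -/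
def nonUnitSub (A : C) (hloc : IsLocalRing (End A)) : Submodule K (A ⟶ A) where
  carrier := {e | ¬ IsUnit (End.of e)}
  add_mem' := fun {a b} ha hb hab => by
    letI := hloc
    obtain ⟨v, hv⟩ := hab
    have hsum : End.of a * ((v⁻¹ : (End A)ˣ) : End A)
        + End.of b * ((v⁻¹ : (End A)ˣ) : End A) = 1 := by
      rw [← add_mul]
      have : End.of a + End.of b = End.of (a + b) := rfl
      rw [this, ← hv]
      exact v.mul_inv
    rcases IsLocalRing.isUnit_or_isUnit_of_add_one hsum with h' | h'
    · refine ha ?_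
      have heq : End.of a = (End.of a * ((v⁻¹ : (End A)ˣ) : End A)) * (v : End A) := by
        rw [mul_assoc, v.inv_mul, mul_one]
      rw [heq]
      exact h'.mul v.isUnit
    · refine hb ?_
      have heq : End.of b = (End.of b * ((v⁻¹ : (End A)ˣ) : End A)) * (v : End A) := by
        rw [mul_assoc, v.inv_mul, mul_one]
      rw [heq]
      exact h'.mul v.isUnit
  zero_mem' := by
    letI := hloc
    intro hu
    obtain ⟨v, hv⟩ := hu
    have h01 := v.inv_mul
    have h00 : End.of (0 : A ⟶ A) = (0 : End A) := rfl
    rw [hv, h00, mul_zero] at h01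
    exact zero_ne_one h01
  smul_mem' := fun c m hm hcm => by
    letI := hloc
    by_cases hc : c = 0
    · subst hc
      obtain ⟨v, hv⟩ := hcm
      have h01 := v.inv_mul
      have h00 : End.of ((0 : K) • m) = (0 : End A) := by
        show (0 : K) • m = (0 : A ⟶ A)
        rw [zero_smul]
      rw [hv, h00, mul_zero] at h01
      exact zero_ne_one h01
    · apply hm
      have hone : (End.of (c⁻¹ • (𝟙 A))) * (End.of (c • (𝟙 A))) = 1 := by
        show (c • (𝟙 A)) ≫ (c⁻¹ • (𝟙 A)) = 𝟙 A
        simp [smul_smul, inv_mul_cancel₀ hc, mul_inv_cancel₀ hc]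
      have hone' : (End.of (c • (𝟙 A))) * (End.of (c⁻¹ • (𝟙 A))) = 1 := by
        show (c⁻¹ • (𝟙 A)) ≫ (c • (𝟙 A)) = 𝟙 A
        simp [smul_smul, inv_mul_cancel₀ hc, mul_inv_cancel₀ hc]
      have hu2 : IsUnit (End.of (c⁻¹ • (𝟙 A))) := ⟨⟨_, _, hone, hone'⟩, rfl⟩
      have hmeq : End.of m = (End.of (c⁻¹ • (𝟙 A))) * (End.of (c • m)) := by
        show m = (c • m) ≫ (c⁻¹ • (𝟙 A))
        symm
        simp [smul_smul, inv_mul_cancel₀ hc]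
      rw [hmeq]
      exact hu2.mul hcm

/-- The identity, as a linear equivalence between `End A` and `A ⟶ A`. -/
def endHomEquiv (A : C) : End A ≃ₗ[K] (A ⟶ A) where
  toFun := fun e => e
  map_add' := fun _ _ => rfl
  map_smul' := fun _ _ => rfl
  invFun := fun e => e
  left_inv := fun _ => rfl
  right_inv := fun _ => rfl

/-! ### The quotient maps induced by precomposition -/

/-- Precomposition, descended to the quotients by `Mker`. -/
noncomputable def precompQ (T : C) {X X' : C} (f : X' ⟶ X) (Y : C) :
    ((X ⟶ Y) ⧸ Mker K T X Y) →ₗ[K] ((X' ⟶ Y) ⧸ Mker K T X' Y) :=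
  Submodule.mapQ _ _ (Linear.leftComp K Y f)
    (fun m hm => Submodule.mem_comap.mpr (fun t => by
      show t ≫ (f ≫ m) = 0
      rw [← Category.assoc]
      exact hm (t ≫ f)))

lemma precompQ_mk (T : C) {X X' : C} (f : X' ⟶ X) (Y : C) (m : X ⟶ Y) :
    precompQ K T f Y (Submodule.Quotient.mk m) = Submodule.Quotient.mk (f ≫ m) := by
  unfold precompQ
  rw [Submodule.mapQ_apply]
  rfl

/-! ### The main counting lemma -/

lemma count_main (T : C)
    (hT : ∀ X : C, (∀ f : T ⟶ (shiftFunctor C (1 : ℤ)).obj X, f = 0) ↔ InAdd T X)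
    (homfin : ∀ X Y : C, FiniteDimensional K (X ⟶ Y))
    {A E Z : C} (f : A ⟶ E) (g : E ⟶ Z) (h : Z ⟶ (shiftFunctor C (1 : ℤ)).obj A)
    (hTri : Triangle.mk f g h ∈ distTriang C)
    (hAT : ¬ InAdd ((shiftFunctor C (1 : ℤ)).obj T) A)
    (hals : ∀ (W : C) (u : A ⟶ W), (¬ ∃ r : W ⟶ A, u ≫ r = 𝟙 A) → ∃ w : E ⟶ W, f ≫ w = u)
    (hth : ∀ t' : T ⟶ Z, t' ≫ h = 0)
    (Y : C) :
    homPair K ((shiftFunctor C (1 : ℤ)).obj T) E Y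
      = homPair K ((shiftFunctor C (1 : ℤ)).obj T) Z Y
        + Module.finrank K (LinearMap.range (precompQ K T f Y)) := by
  haveI := homfin E Y
  haveI := homfin Z Y
  haveI := homfin A Y
  have hfg : f ≫ g = 0 := comp_distTriang_mor_zero₁₂ _ hTri
  -- injectivity of the map induced by g
  have hkerg : LinearMap.ker (precompQ K T g Y) = ⊥ := by
    rw [LinearMap.ker_eq_bot']
    intro x hx
    obtain ⟨m, rfl⟩ := Submodule.Quotient.mk_surjective _ x
    rw [precompQ_mk, Submodule.Quotient.mk_eq_zero] at hx
    rw [Submodule.Quotient.mk_eq_zero]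
    intro t'
    obtain ⟨s, hs⟩ : ∃ s : T ⟶ E, t' = s ≫ g := Triangle.coyoneda_exact₃ _ hTri t' (hth t')
    rw [hs, Category.assoc]
    exact hx s
  -- exactness in the middle
  have hker_f : LinearMap.ker (precompQ K T f Y) = LinearMap.range (precompQ K T g Y) := by
    apply le_antisymm
    · intro x hx
      obtain ⟨x, rfl⟩ := Submodule.Quotient.mk_surjective _ x
      rw [LinearMap.mem_ker, precompQ_mk, Submodule.Quotient.mk_eq_zero] at hx
      obtain ⟨W, u, v, hW, huv⟩ := vanish_factors K T hT homfin _ hx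
      have hnon : ¬ ∃ r : W ⟶ A, u ≫ r = 𝟙 A := by
        rintro ⟨r, hr⟩
        exact hAT (inAdd_of_retract hW u r hr)
      obtain ⟨w, hw⟩ := hals W u hnon
      have h2 : f ≫ (x - w ≫ v) = 0 := by
        rw [Preadditive.comp_sub, ← Category.assoc, hw, huv, sub_self]
      obtain ⟨y, hy⟩ : ∃ y : Z ⟶ Y, x - w ≫ v = g ≫ y := Triangle.yoneda_exact₂ _ hTri (x - w ≫ v) h2
      have hy' : x - w ≫ v = g ≫ y := hy
      refine ⟨Submodule.Quotient.mk y, ?_⟩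
      rw [precompQ_mk, Submodule.Quotient.eq]
      have : g ≫ y - x = -(w ≫ v) := by rw [← hy']; abel
      rw [this]
      exact Submodule.neg_mem _
        (fun t => factors_vanish T hT ⟨W, w, v, hW, rfl⟩ t)
    · rintro _ ⟨y, rfl⟩
      obtain ⟨y, rfl⟩ := Submodule.Quotient.mk_surjective _ y
      rw [LinearMap.mem_ker, precompQ_mk, precompQ_mk, Submodule.Quotient.mk_eq_zero,
        ← Category.assoc, hfg]
      intro t
      rw [zero_comp, comp_zero]
  have r1 := LinearMap.finrank_range_add_finrank_ker (precompQ K T f Y)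
  have r2 := LinearMap.finrank_range_add_finrank_ker (precompQ K T g Y)
  rw [hkerg, finrank_bot, add_zero] at r2
  rw [hker_f, r2] at r1
  rw [homPair_eq K T hT homfin E Y, homPair_eq K T hT homfin Z Y]
  omega

end Aux

/-- In the 2-CY cluster-tilting setting, for indecomposables `A`, `B`
with `A ∉ add(ΣT)`, with `ℓ_A = [A] + [Σ⁻¹A] − [E]` coming from the almost-split triangle
`A → E → Σ⁻¹A → ΣA`, one has `⟨ℓ_A, B⟩ = 0` if `A ≇ B`, and
`⟨ℓ_A, A⟩ = dim_K K_A > 0`. -/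
theorem stmt10
    (homfin : ∀ X Y : C, FiniteDimensional K (X ⟶ Y))
    (hKS : ∀ X : C, Indec X → IsLocalRing (End X))
    (D : ∀ X Y : C, (X ⟶ (shiftFunctor C (1 : ℤ)).obj Y) ≃ₗ[K]
        ((Y ⟶ (shiftFunctor C (1 : ℤ)).obj X) →ₗ[K] K))
    (hD₁ : ∀ (X X' Y : C) (f : X' ⟶ X) (m : X ⟶ (shiftFunctor C (1 : ℤ)).obj Y)
        (u : Y ⟶ (shiftFunctor C (1 : ℤ)).obj X'),
        D X' Y (f ≫ m) u = D X Y m (u ≫ (shiftFunctor C (1 : ℤ)).map f))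
    (hD₂ : ∀ (X Y Y' : C) (g : Y ⟶ Y') (m : X ⟶ (shiftFunctor C (1 : ℤ)).obj Y)
        (u : Y' ⟶ (shiftFunctor C (1 : ℤ)).obj X),
        D X Y' (m ≫ (shiftFunctor C (1 : ℤ)).map g) u = D X Y m (g ≫ u))
    (T : C) (hT : ∀ X : C, (∀ f : T ⟶ (shiftFunctor C (1 : ℤ)).obj X, f = 0) ↔ InAdd T X)
    (A B : C) (hA : Indec A) (hB : Indec B)
    (hAT : ¬ InAdd ((shiftFunctor C (1 : ℤ)).obj T) A)
    (E : C) (f : A ⟶ E) (g : E ⟶ (shiftFunctor C (-1 : ℤ)).obj A)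
    (h : (shiftFunctor C (-1 : ℤ)).obj A ⟶ (shiftFunctor C (1 : ℤ)).obj A)
    (hAS : AlmostSplitTriangle f g h) :
    (¬ Nonempty (A ≅ B) →
        homPair K ((shiftFunctor C (1 : ℤ)).obj T) A B
          + homPair K ((shiftFunctor C (1 : ℤ)).obj T) ((shiftFunctor C (-1 : ℤ)).obj A) B
          = homPair K ((shiftFunctor C (1 : ℤ)).obj T) E B)
      ∧ homPair K ((shiftFunctor C (1 : ℤ)).obj T) A A
          + homPair K ((shiftFunctor C (1 : ℤ)).obj T) ((shiftFunctor C (-1 : ℤ)).obj A) A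
          = homPair K ((shiftFunctor C (1 : ℤ)).obj T) E A + resDim K A
      ∧ 0 < resDim K A := by
  classical
  obtain ⟨hTri, hIA, hIZ, hne0, halmost⟩ := hAS
  have hA0 : ¬ Limits.IsZero A := hA.1
  have hlocA : IsLocalRing (End A) := hKS A hA
  haveI := homfin A A
  haveI := homfin E A
  haveI := homfin A B
  let α : (shiftFunctor C (1 : ℤ)).obj ((shiftFunctor C (-1 : ℤ)).obj A) ≅ A :=
    (shiftFunctorCompIsoId C (-1 : ℤ) (1 : ℤ) (by norm_num)).app A
  have hIndecSZ : Indec ((shiftFunctor C (1 : ℤ)).obj ((shiftFunctor C (-1 : ℤ)).obj A)) :=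
    indec_of_iso hA α
  have hlocSZ : IsLocalRing
      (End ((shiftFunctor C (1 : ℤ)).obj ((shiftFunctor C (-1 : ℤ)).obj A))) :=
    hKS _ hIndecSZ
  have hhSf : h ≫ (shiftFunctor C (1 : ℤ)).map f = 0 := comp_distTriang_mor_zero₃₁ _ hTri
  -- any composite through `f` is a non-unit of `End A`
  have hf_nonunit : ∀ x : E ⟶ A, ¬ IsUnit (End.of (f ≫ x)) := by
    intro x hx
    obtain ⟨v, hv⟩ := hx
    have h1 : (f ≫ x) ≫ ((v⁻¹ : (End A)ˣ) : End A) = 𝟙 A := by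
      have h1' := v.inv_mul
      rw [hv] at h1'
      exact h1'
    have hid : f ≫ (x ≫ ((v⁻¹ : (End A)ˣ) : End A)) = 𝟙 A := by
      rw [← Category.assoc]; exact h1
    apply hne0
    calc h = h ≫ (shiftFunctor C (1 : ℤ)).map (𝟙 A) := by
            rw [(shiftFunctor C (1 : ℤ)).map_id, Category.comp_id]
      _ = h ≫ (shiftFunctor C (1 : ℤ)).map (f ≫ (x ≫ ((v⁻¹ : (End A)ˣ) : End A))) := by
            rw [hid]
      _ = (h ≫ (shiftFunctor C (1 : ℤ)).map f) ≫
            (shiftFunctor C (1 : ℤ)).map (x ≫ ((v⁻¹ : (End A)ˣ) : End A)) := by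
            rw [(shiftFunctor C (1 : ℤ)).map_comp, ← Category.assoc]
      _ = 0 := by rw [hhSf, zero_comp]
  -- the duality argument : every morphism from `T` kills `h`
  have hth : ∀ t' : T ⟶ (shiftFunctor C (-1 : ℤ)).obj A, t' ≫ h = 0 := by
    intro t'
    have key : ∀ u : A ⟶ (shiftFunctor C (1 : ℤ)).obj T,
        (D ((shiftFunctor C (-1 : ℤ)).obj A) A) h
          (u ≫ (shiftFunctor C (1 : ℤ)).map t') = 0 := by
      intro u
      have hnonsec : ¬ ∃ r, (u ≫ (shiftFunctor C (1 : ℤ)).map t') ≫ r = 𝟙 A := by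
        rintro ⟨r, hr⟩
        have h2 : r ≫ (u ≫ (shiftFunctor C (1 : ℤ)).map t') = 𝟙 _ :=
          retract_id hA0 hlocSZ _ r hr
        have h3 : (r ≫ u) ≫ (shiftFunctor C (1 : ℤ)).map t' = 𝟙 _ := by
          rw [Category.assoc]; exact h2
        have h4 : InAdd ((shiftFunctor C (1 : ℤ)).obj T)
            ((shiftFunctor C (1 : ℤ)).obj ((shiftFunctor C (-1 : ℤ)).obj A)) :=
          inAdd_of_retract (inAdd_self _) (r ≫ u) _ h3
        exact hAT (inAdd_of_iso h4 α.symm)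
      obtain ⟨w, hw⟩ := halmost _ (u ≫ (shiftFunctor C (1 : ℤ)).map t') hnonsec
      have h5 := hD₂ ((shiftFunctor C (-1 : ℤ)).obj A) A E f h w
      rw [hw] at h5
      rw [← h5, hhSf, map_zero, LinearMap.zero_apply]
    have hz : (D T A) (t' ≫ h) = 0 := by
      apply LinearMap.ext
      intro u
      rw [LinearMap.zero_apply, hD₁ ((shiftFunctor C (-1 : ℤ)).obj A) T A t' h u]
      exact key u
    exact (D T A).map_eq_zero_iff.mp hz
  -- part 1 : target B with A ≇ B
  have part1 : ¬ Nonempty (A ≅ B) →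
      homPair K ((shiftFunctor C (1 : ℤ)).obj T) A B
        + homPair K ((shiftFunctor C (1 : ℤ)).obj T) ((shiftFunctor C (-1 : ℤ)).obj A) B
        = homPair K ((shiftFunctor C (1 : ℤ)).obj T) E B := by
    intro hne
    have hsurj : LinearMap.range (precompQ K T f B) = ⊤ := by
      rw [LinearMap.range_eq_top]
      intro ybar
      obtain ⟨u, rfl⟩ := Submodule.Quotient.mk_surjective _ ybar
      have hnon : ¬ ∃ r : B ⟶ A, u ≫ r = 𝟙 A := by
        rintro ⟨r, hr⟩
        exact hne ⟨⟨u, r, hr, retract_id hA0 (hKS B hB) u r hr⟩⟩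
      obtain ⟨w, hw⟩ := halmost B u hnon
      exact ⟨Submodule.Quotient.mk w, by rw [precompQ_mk, hw]⟩
    have hc := count_main K T hT homfin f g h hTri hAT halmost hth B
    rw [hsurj, finrank_top K ((A ⟶ B) ⧸ Mker K T A B)] at hc
    rw [homPair_eq K T hT homfin A B]
    omega
  -- part 2 : target A
  have hc := count_main K T hT homfin f g h hTri hAT halmost hth A
  have hMle : Mker K T A A ≤ nonUnitSub K A hlocA := by
    intro e he hu
    obtain ⟨W, u, v, hW, huv⟩ := vanish_factors K T hT homfin e he
    obtain ⟨vu, hv⟩ := hu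
    have h1 : e ≫ ((vu⁻¹ : (End A)ˣ) : End A) = 𝟙 A := by
      have h1' := vu.inv_mul
      rw [hv] at h1'
      exact h1'
    refine hAT (inAdd_of_retract hW u (v ≫ ((vu⁻¹ : (End A)ˣ) : End A)) ?_)
    rw [← Category.assoc, huv]
    exact h1
  have hrange : LinearMap.range (precompQ K T f A)
      = (nonUnitSub K A hlocA).map (Mker K T A A).mkQ := by
    apply le_antisymm
    · rintro _ ⟨xbar, rfl⟩
      obtain ⟨x, rfl⟩ := Submodule.Quotient.mk_surjective _ xbar
      rw [precompQ_mk]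
      exact Submodule.mem_map.mpr ⟨f ≫ x, hf_nonunit x, Submodule.mkQ_apply _ _⟩
    · rintro _ ⟨e, he, rfl⟩
      have hnon : ¬ ∃ r : A ⟶ A, e ≫ r = 𝟙 A := by
        rintro ⟨r, hr⟩
        exact he (isUnit_of_section hA0 hlocA e r hr)
      obtain ⟨w, hw⟩ := halmost A e hnon
      refine ⟨Submodule.Quotient.mk w, ?_⟩
      rw [precompQ_mk, hw, Submodule.mkQ_apply]
  have hφ := LinearMap.finrank_range_add_finrank_ker
    ((Mker K T A A).mkQ.comp (nonUnitSub K A hlocA).subtype)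
  rw [LinearMap.range_comp, Submodule.range_subtype, LinearMap.ker_comp, Submodule.ker_mkQ,
    LinearEquiv.finrank_eq (Submodule.comapSubtypeEquivOfLe hMle)] at hφ
  have hq := Submodule.finrank_quotient_add_finrank (Mker K T A A)
  have hres : resDim K A
      = Module.finrank K (A ⟶ A) - Module.finrank K (nonUnitSub K A hlocA) := by
    unfold resDim
    have hspan : Submodule.map ((endHomEquiv K A : End A ≃ₗ[K] (A ⟶ A)) :
          End A →ₗ[K] (A ⟶ A))
        (Submodule.span K {e : End A | ¬ IsUnit e}) = nonUnitSub K A hlocA := by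
      rw [Submodule.map_span]
      have himg : ((endHomEquiv K A : End A ≃ₗ[K] (A ⟶ A)) : End A →ₗ[K] (A ⟶ A)) ''
          {e : End A | ¬ IsUnit e} = ((nonUnitSub K A hlocA : Set (A ⟶ A))) := by
        ext x
        constructor
        · rintro ⟨e, he, rfl⟩
          exact he
        · intro hx
          exact ⟨x, hx, rfl⟩
      rw [himg, Submodule.span_eq]
    have h2 : Module.finrank K (Submodule.span K {e : End A | ¬ IsUnit e})
        = Module.finrank K (nonUnitSub K A hlocA) := by
      rw [← hspan, LinearEquiv.finrank_map_eq]
    have h3 : Module.finrank K (End A) = Module.finrank K (A ⟶ A) :=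
      LinearEquiv.finrank_eq (endHomEquiv K A)
    rw [h2, h3]
  have hlt : Module.finrank K (nonUnitSub K A hlocA) < Module.finrank K (A ⟶ A) := by
    apply Submodule.finrank_lt
    intro hEq
    have h1A : (𝟙 A) ∈ nonUnitSub K A hlocA := hEq ▸ Submodule.mem_top
    exact h1A isUnit_one
  have hrk : Module.finrank K (LinearMap.range (precompQ K T f A))
      = Module.finrank K ((nonUnitSub K A hlocA).map (Mker K T A A).mkQ) := by
    rw [hrange]
  refine ⟨part1, ?_, ?_⟩
  · rw [homPair_eq K T hT homfin A A, hres]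
    omega
  · rw [hres]
    omega
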